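/- arXiv:0904.4851 — 2 statements merged into one kernel-verified Lean document; each statement's English description precedes it below -/
import Mathlib

section
/- Let G be a graph on vertex set V with |V| = n, let p > 0 and 0 < ε < 1/10. Suppose: (a) every vertex has degree at most (1+3ε)pn, and (b) for a subset I ⊆ V with |I| ≥ (1-ε)n, the number of edges between I and V∖I satisfies e(I, V∖I) ≥ |I|(n-|I|)p(1-3ε). Then the set X = {v ∈ V∖I : |Γ(v) ∩ I| < (1 - 3√ε)pn} satisfies |X| ≤ 3√ε·(n - |I|). -/
open Finset

/-! Split `e(I, V∖I) = ∑_{v ∉ I} |Γ(v) ∩ I|` into the low vertices `X`, each contributing less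
than `(1-3√ε)pn`, and the others, each contributing at most their degree `(1+3ε)pn`. Against
the lower bound `(1-ε)(1-3ε)pn(n-|I|)` this leaves room for a total shortfall of only
`O(ε)pn(n-|I|)`, while each low vertex falls short of `(1+3ε)pn` by more than `3(√ε+ε)pn`; hence
`|X| = O(√ε)(n-|I|)`. -/

theorem Finset.sum_le_card_filter_lt_mul_add {α R : Type*} [CommRing R] [LinearOrder R]
    [IsOrderedRing R] (s : Finset α) (f : α → R) (t D : R) (hD : ∀ a ∈ s, f a ≤ D) :
    ∑ a ∈ s, f a ≤
      #(s.filter fun a => f a < t) * t + (#s - #(s.filter fun a => f a < t)) * D := by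
  have hlow : ∑ a ∈ s.filter (fun a => f a < t), f a ≤ #(s.filter fun a => f a < t) • t :=
    sum_le_card_nsmul _ _ _ fun a ha => (mem_filter.mp ha).2.le
  have hhigh : ∑ a ∈ s.filter (fun a => ¬f a < t), f a ≤ #(s.filter fun a => ¬f a < t) • D :=
    sum_le_card_nsmul _ _ _ fun a ha => hD a (mem_filter.mp ha).1
  have hcard := card_filter_add_card_filter_not (s := s) (fun a => f a < t)
  rw [← sum_filter_add_sum_filter_not s (fun a => f a < t), ← hcard]
  simp only [nsmul_eq_mul] at hlow hhigh
  push_cast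
  rw [add_sub_cancel_left]
  exact add_le_add hlow hhigh

theorem SimpleGraph.card_neighborFinset_inter_le_degree {V : Type*} [Fintype V] [DecidableEq V]
    (G : SimpleGraph V) [DecidableRel G.Adj] (v : V) (I : Finset V) :
    #(G.neighborFinset v ∩ I) ≤ G.degree v :=
  (card_le_card inter_subset_left).trans_eq (G.card_neighborFinset_eq_degree v)

theorem le_three_mul_sqrt_mul_of_double_count {A k n p ε : ℝ} (hp : 0 < p) (hε0 : 0 < ε)
    (hε1 : 3 * ε ≤ 1) (hA0 : 0 ≤ A) (hAk : A ≤ n - k) (hk : (1 - ε) * n ≤ k)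
    (h : k * (n - k) * p * (1 - 3 * ε) ≤
      A * ((1 - 3 * √ε) * p * n) + (n - k - A) * ((1 + 3 * ε) * p * n)) :
    A ≤ 3 * √ε * (n - k) := by
  set s := √ε
  have hs0 : 0 < s := Real.sqrt_pos.mpr hε0
  have hε : ε = s ^ 2 := (Real.sq_sqrt hε0.le).symm
  have hm : 0 ≤ n - k := hA0.trans hAk
  rcases (show 0 ≤ n by nlinarith).eq_or_lt with rfl | hn
  · nlinarith
  have hpn : 0 < p * n := mul_pos hp hn
  have hnormalized : (1 - ε) * (1 - 3 * ε) * (n - k) ≤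
      A * (1 - 3 * s) + (n - k - A) * (1 + 3 * ε) := by
    refine le_of_mul_le_mul_left ?_ hpn
    have : (1 - ε) * n * (n - k) * p * (1 - 3 * ε) ≤ k * (n - k) * p * (1 - 3 * ε) := by
      gcongr
    linarith
  have hsε : 0 < 3 * (s + ε) := by positivity
  refine le_of_mul_le_mul_left ?_ hsε
  -- the shortfall `(7ε - 3ε²)(n - k)` is at most `3(√ε + ε) · 3√ε(n - k) = 9(ε + ε√ε)(n - k)`
  rw [hε] at hnormalized ⊢
  nlinarith [mul_nonneg hm hs0.le, mul_nonneg (mul_nonneg hm hs0.le) hs0.le,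
    mul_nonneg (mul_nonneg (mul_nonneg hm hs0.le) hs0.le) hs0.le]

/-- Double counting: if every vertex of `G` has degree at most `(1+3ε)pn` and
`e(I, V∖I) ≥ |I|(n-|I|)p(1-3ε)` for a set `I` with `|I| ≥ (1-ε)n`, then the set of
vertices outside `I` with fewer than `(1-3√ε)pn` neighbours in `I` has size at most
`3√ε(n - |I|)`. -/
theorem few_low_degree_vertices {V : Type*} [Fintype V] [DecidableEq V]
    (G : SimpleGraph V) [DecidableRel G.Adj] (p ε : ℝ) (hp : 0 < p)
    (hε0 : 0 < ε) (hε1 : ε < 1 / 10)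
    (n : ℕ) (hn : n = Fintype.card V)
    (I : Finset V)
    (hdeg : ∀ v : V, (G.degree v : ℝ) ≤ (1 + 3 * ε) * p * n)
    (hI : ((1 - ε) * n : ℝ) ≤ I.card)
    (hedges : ((I.card : ℝ) * ((n : ℝ) - I.card) * p * (1 - 3 * ε)) ≤
      ∑ v ∈ Iᶜ, ((G.neighborFinset v ∩ I).card : ℝ)) :
    (((Iᶜ).filter (fun v =>
        ((G.neighborFinset v ∩ I).card : ℝ) < (1 - 3 * Real.sqrt ε) * p * n)).card : ℝ)
      ≤ 3 * Real.sqrt ε * ((n : ℝ) - I.card) := by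
  subst hn
  have hlow := (Iᶜ).sum_le_card_filter_lt_mul_add (fun v => ((G.neighborFinset v ∩ I).card : ℝ))
    ((1 - 3 * √ε) * p * Fintype.card V) ((1 + 3 * ε) * p * Fintype.card V) fun v _ =>
      (Nat.cast_le.mpr (G.card_neighborFinset_inter_le_degree v I)).trans (hdeg v)
  have hcompl : (#Iᶜ : ℝ) = Fintype.card V - #I := by
    rw [card_compl, Nat.cast_sub (card_le_univ I)]
  rw [hcompl] at hlow
  refine le_three_mul_sqrt_mul_of_double_count hp hε0 (by linarith) (by positivity) ?_ hI
    (hedges.trans hlow)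
  exact hcompl ▸ mod_cast card_filter_le _ _
end

section
/- W.h.p. the random graph G(n,p) with p ≥ α(n)·ln(n)/n and α(n) → ∞ satisfies: for every subset S of vertices, e(S, V∖S) = |S|(n-|S|)p(1 ± √8·α(n)^{-1/2}). In particular every vertex has degree (1 ± 3α(n)^{-1/2})pn. -/
/-!
The cut count `e(S, Sᶜ)` is a sum of `|S|(n - |S|)` independent Bernoulli(`p`) indicators, so
with mean `m = |S|(n - |S|)p` the multiplicative Chernoff bound (driven by
`exp t ≤ 1 + t + 2t²/3` for `|t| ≤ 3/4`) gives `P(|e(S, Sᶜ) - m| > εm) ≤ 2 exp(-ε²m/3)`.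
For `ε² = 8/α` and `p ≥ α log n / n` this is at most `2(n^(-4k/3) + n^(-4(n-k)/3))` when
`|S| = k`, and the union bound over all nonempty proper `S` gives
`4((1 + n^(-4/3))^n - 1) ≤ 4(exp(n^(-1/3)) - 1) → 0`.
The degree bound is the case `S = {v}`: since `α ≤ n`, the error `p` made by replacing
`n - 1` with `n` is absorbed in the slack between `√8` and `3`.
-/

open Finset MeasureTheory Filter

/-- The graph on `Fin n` determined by edge indicators `ω`. -/
def ERGraph (n : ℕ) (ω : Sym2 (Fin n) → Bool) : SimpleGraph (Fin n) where
  Adj a b := a ≠ b ∧ ω s(a, b) = true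
  symm := by
    constructor
    intro a b h
    exact ⟨h.1.symm, by rw [Sym2.eq_swap]; exact h.2⟩
  loopless := by constructor; intro a h; exact h.1 rfl

instance (n : ℕ) (ω : Sym2 (Fin n) → Bool) : DecidableRel (ERGraph n ω).Adj :=
  fun a b => show Decidable (a ≠ b ∧ ω s(a, b) = true) from inferInstance

/-- The Bernoulli measure on `Bool` with success probability `p`. -/
noncomputable def bernoulliMeasure (p : ℝ) : Measure Bool :=
  ENNReal.ofReal p • Measure.dirac true + ENNReal.ofReal (1 - p) • Measure.dirac false

/-- The distribution of `G(n,p)`: independent Bernoulli(p) indicators on all pairs. -/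
noncomputable def ERMeasure (n : ℕ) (p : ℝ) : Measure (Sym2 (Fin n) → Bool) :=
  Measure.pi fun _ => bernoulliMeasure p

open Real Topology
open ProbabilityTheory (mgf measure_ge_le_exp_mul_mgf measure_le_le_exp_mul_mgf)

instance (p : ℝ) : IsFiniteMeasure (bernoulliMeasure p) := by
  have := (Measure.dirac true).smul_finite (ENNReal.ofReal_ne_top (r := p))
  have := (Measure.dirac false).smul_finite (ENNReal.ofReal_ne_top (r := 1 - p))
  unfold bernoulliMeasure; infer_instance

lemma isProbabilityMeasure_bernoulliMeasure {p : ℝ} (hp0 : 0 ≤ p) (hp1 : p ≤ 1) :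
    IsProbabilityMeasure (bernoulliMeasure p) := by
  constructor
  simp [bernoulliMeasure, ← ENNReal.ofReal_add hp0 (sub_nonneg.2 hp1)]

lemma integral_bernoulliMeasure {p : ℝ} (hp0 : 0 ≤ p) (hp1 : p ≤ 1) (g : Bool → ℝ) :
    ∫ b, g b ∂bernoulliMeasure p = p * g true + (1 - p) * g false := by
  have hg : Integrable g (bernoulliMeasure p) := .of_finite
  rw [bernoulliMeasure] at hg ⊢
  rw [integral_add_measure hg.left_of_add_measure hg.right_of_add_measure, integral_smul_measure,
    integral_smul_measure, integral_dirac, integral_dirac, ENNReal.toReal_ofReal hp0,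
    ENNReal.toReal_ofReal (sub_nonneg.2 hp1), smul_eq_mul, smul_eq_mul]

lemma exp_le_one_add_add_sq {t : ℝ} (ht : |t| ≤ 3 / 4) : exp t ≤ 1 + t + 2 / 3 * t ^ 2 := by
  have h := abs_le.1 (Real.exp_bound (ht.trans (by norm_num)) (by norm_num : 0 < 3))
  norm_num [sum_range_succ, Nat.factorial] at h
  have : |t| ^ 3 ≤ 3 / 4 * t ^ 2 := by
    rw [pow_succ, ← sq_abs t, mul_comm]; exact mul_le_mul_of_nonneg_right ht (sq_nonneg _)
  nlinarith

def countTrue {ι : Type*} (E : Finset ι) (ω : ι → Bool) : ℝ := ∑ i ∈ E, if ω i then 1 else 0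

lemma mgf_countTrue_pi_bernoulliMeasure {ι : Type*} [Fintype ι] {p : ℝ} (hp0 : 0 ≤ p)
    (hp1 : p ≤ 1) (E : Finset ι) (t : ℝ) :
    mgf (countTrue E) (Measure.pi fun _ : ι => bernoulliMeasure p) t =
      (p * exp t + (1 - p)) ^ E.card := by
  classical
  let f : ι → Bool → ℝ := fun i b => if i ∈ E then exp (t * if b then 1 else 0) else 1
  have hexp (ω : ι → Bool) : exp (t * countTrue E ω) = ∏ i, f i (ω i) := by
    simp only [f, countTrue, mul_sum, exp_sum, prod_ite_mem, univ_inter]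
  have hf (i : ι) : ∫ b, f i b ∂bernoulliMeasure p = if i ∈ E then p * exp t + (1 - p) else 1 := by
    rw [integral_bernoulliMeasure hp0 hp1]
    split_ifs <;> simp [f, *]
  simp only [mgf, hexp, integral_fintype_prod_eq_prod, hf, prod_ite_mem, univ_inter,
    prod_const]

lemma mgf_countTrue_pi_bernoulliMeasure_le {ι : Type*} [Fintype ι] {p : ℝ} (hp0 : 0 ≤ p)
    (hp1 : p ≤ 1) (E : Finset ι) (t : ℝ) :
    mgf (countTrue E) (Measure.pi fun _ : ι => bernoulliMeasure p) t ≤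
      exp (E.card * p * (exp t - 1)) := by
  rw [mgf_countTrue_pi_bernoulliMeasure hp0 hp1, mul_assoc, exp_nat_mul]
  have hbase : 0 ≤ p * exp t + (1 - p) := by have := exp_pos t; nlinarith
  gcongr
  linarith [add_one_le_exp (p * (exp t - 1))]

theorem measureReal_abs_sub_gt_le_of_mgf_le {Ω : Type*} [MeasurableSpace Ω] {μ : Measure Ω}
    [IsFiniteMeasure μ] {X : Ω → ℝ} {m ε : ℝ} (hm : 0 ≤ m) (hε0 : 0 ≤ ε) (hε : ε ≤ 3 / 4)
    (hint : ∀ t, Integrable (fun ω => exp (t * X ω)) μ)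
    (hmgf : ∀ t, mgf X μ t ≤ exp (m * (exp t - 1))) :
    μ.real {ω | ε * m < |X ω - m|} ≤ 2 * exp (-(ε ^ 2 * m) / 3) := by
  have key (t : ℝ) (ht : |t| ≤ 3 / 4) :
      exp (-t * ((1 + t) * m)) * mgf X μ t ≤ exp (-(t ^ 2 * m) / 3) :=
    calc exp (-t * ((1 + t) * m)) * mgf X μ t
        ≤ exp (-t * ((1 + t) * m)) * exp (m * (exp t - 1)) := by gcongr; exact hmgf t
      _ = exp (-t * ((1 + t) * m) + m * (exp t - 1)) := (exp_add _ _).symm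
      _ ≤ exp (-(t ^ 2 * m) / 3) := by
        gcongr; nlinarith [exp_le_one_add_add_sq ht]
  have hupper := (measure_ge_le_exp_mul_mgf ((1 + ε) * m) hε0 (hint ε)).trans
    (key ε (by rwa [abs_of_nonneg hε0]))
  have hlower := (measure_le_le_exp_mul_mgf ((1 + -ε) * m) (neg_nonpos.2 hε0) (hint (-ε))).trans
    (key (-ε) (by rwa [abs_neg, abs_of_nonneg hε0]))
  rw [neg_sq] at hlower
  calc μ.real {ω | ε * m < |X ω - m|}
      ≤ μ.real ({ω | (1 + ε) * m ≤ X ω} ∪ {ω | X ω ≤ (1 + -ε) * m}) := by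
        refine measureReal_mono fun ω (hω : ε * m < |X ω - m|) => ?_
        rcases lt_abs.1 hω with h | h
        · exact .inl (show (1 + ε) * m ≤ X ω by linarith)
        · exact .inr (show X ω ≤ (1 + -ε) * m by linarith)
    _ ≤ μ.real {ω | (1 + ε) * m ≤ X ω} + μ.real {ω | X ω ≤ (1 + -ε) * m} :=
        measureReal_union_le _ _
    _ ≤ 2 * exp (-(ε ^ 2 * m) / 3) := by linarith

def crossPairs {V : Type*} [Fintype V] [DecidableEq V] (S : Finset V) : Finset (Sym2 V) :=
  (Sᶜ ×ˢ S).image Sym2.mk.uncurry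

lemma injOn_sym2Mk_compl_product {V : Type*} [Fintype V] [DecidableEq V] (S : Finset V) :
    Set.InjOn Sym2.mk.uncurry (↑(Sᶜ ×ˢ S) : Set (V × V)) := by
  rintro ⟨a, b⟩ hab ⟨c, d⟩ hcd h
  simp only [coe_product, Set.mem_prod, mem_coe, mem_compl] at hab hcd
  rcases Sym2.eq_iff.1 h with ⟨rfl, rfl⟩ | ⟨rfl, rfl⟩
  · rfl
  · exact absurd hcd.2 hab.1

lemma card_crossPairs {V : Type*} [Fintype V] [DecidableEq V] (S : Finset V) :
    #(crossPairs S) = #Sᶜ * #S := by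
  rw [crossPairs, card_image_of_injOn (injOn_sym2Mk_compl_product S), card_product]

@[simp]
lemma ERGraph_adj {n : ℕ} {ω : Sym2 (Fin n) → Bool} {a b : Fin n} :
    (ERGraph n ω).Adj a b ↔ a ≠ b ∧ ω s(a, b) = true :=
  Iff.rfl

lemma countTrue_crossPairs (n : ℕ) (ω : Sym2 (Fin n) → Bool) (S : Finset (Fin n)) :
    countTrue (crossPairs S) ω = ∑ v ∈ Sᶜ, (((ERGraph n ω).neighborFinset v ∩ S).card : ℝ) := by
  rw [countTrue, crossPairs, sum_image (injOn_sym2Mk_compl_product S), sum_product]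
  refine sum_congr rfl fun a ha => ?_
  have : (ERGraph n ω).neighborFinset a ∩ S = S.filter fun b => ω s(a, b) := by
    ext b
    simp only [mem_inter, SimpleGraph.mem_neighborFinset, ERGraph_adj, mem_filter]
    exact ⟨fun h => ⟨h.2, h.1.2⟩, fun h => ⟨⟨fun hab => mem_compl.1 ha (hab ▸ h.1), h.2⟩, h.1⟩⟩
  rw [this, card_filter]
  push_cast
  rfl

lemma sum_card_neighborFinset_inter_singleton {V : Type*} [Fintype V] [DecidableEq V]
    (G : SimpleGraph V) [DecidableRel G.Adj] (v : V) :
    ∑ w ∈ {v}ᶜ, #(G.neighborFinset w ∩ {v}) = G.degree v := by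
  have hterm (w : V) : #(G.neighborFinset w ∩ {v}) = if G.Adj v w then 1 else 0 := by
    by_cases h : G.Adj v w <;> simp [h, G.adj_comm]
  rw [sum_subset (subset_univ _) fun w _ hw => by simp_all [mem_compl]]
  simp only [hterm]
  rw [sum_boole]
  simp [← G.card_neighborFinset_eq_degree, G.neighborFinset_eq_filter]

def CutConcentrated (n : ℕ) (p ε : ℝ) (ω : Sym2 (Fin n) → Bool) (S : Finset (Fin n)) : Prop :=
  |(∑ v ∈ Sᶜ, (((ERGraph n ω).neighborFinset v ∩ S).card : ℝ)) -
      (S.card : ℝ) * ((n : ℝ) - S.card) * p| ≤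
    ε * ((S.card : ℝ) * ((n : ℝ) - S.card) * p)

lemma cutConcentrated_of_eq_empty_or_eq_univ {n : ℕ} (p ε : ℝ) (ω : Sym2 (Fin n) → Bool)
    {S : Finset (Fin n)} (hS : S = ∅ ∨ S = univ) : CutConcentrated n p ε ω S := by
  rcases hS with rfl | rfl <;> simp [CutConcentrated]

instance (n : ℕ) (p : ℝ) : IsFiniteMeasure (ERMeasure n p) := by
  unfold ERMeasure; infer_instance

lemma measureReal_not_cutConcentrated_le {n : ℕ} {p ε : ℝ} (hp0 : 0 ≤ p) (hp1 : p ≤ 1)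
    (hε0 : 0 ≤ ε) (hε : ε ≤ 3 / 4) (S : Finset (Fin n)) :
    (ERMeasure n p).real {ω | ¬ CutConcentrated n p ε ω S} ≤
      2 * exp (-(ε ^ 2 * ((S.card : ℝ) * ((n : ℝ) - S.card) * p)) / 3) := by
  have hm : (S.card : ℝ) * ((n : ℝ) - S.card) * p = #(crossPairs S) * p := by
    rw [card_crossPairs, card_compl, Fintype.card_fin, Nat.cast_mul,
      Nat.cast_sub (card_le_univ S |>.trans_eq (Fintype.card_fin n))]
    ring
  have hset : {ω | ¬ CutConcentrated n p ε ω S} =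
      {ω | ε * (#(crossPairs S) * p) < |countTrue (crossPairs S) ω - #(crossPairs S) * p|} := by
    ext ω
    simp only [CutConcentrated, countTrue_crossPairs, hm, not_le, Set.mem_ofPred_eq]
  rw [hset, hm]
  exact measureReal_abs_sub_gt_le_of_mgf_le (by positivity) hε0 hε (fun _ => .of_finite)
    (mgf_countTrue_pi_bernoulliMeasure_le hp0 hp1 _)

lemma abs_degree_sub_le_of_cutConcentrated {n : ℕ} {p ε : ℝ} {ω : Sym2 (Fin n) → Bool}
    {v : Fin n} (hp : 0 ≤ p) (hε : 0 ≤ ε) (h : CutConcentrated n p ε ω {v}) :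
    |((ERGraph n ω).degree v : ℝ) - p * n| ≤ ε * (p * n) + p := by
  rw [CutConcentrated, ← Nat.cast_sum, sum_card_neighborFinset_inter_singleton, card_singleton,
    Nat.cast_one, one_mul] at h
  have : ε * (((n : ℝ) - 1) * p) ≤ ε * (p * n) := by nlinarith [mul_nonneg hε hp]
  rw [abs_le] at h ⊢
  constructor <;> linarith

/-- If `k ≤ j` then `kj / (k + j) ≥ k / 2`, so the exponent is at least `(4/3) k L`. -/
lemma exp_neg_mul_le_pow_add_pow {k j : ℕ} {L c : ℝ} (hL : 0 ≤ L) (hc : 8 * L / (k + j) ≤ c) :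
    exp (-(c * (k * j)) / 3) ≤ exp (-(4 / 3) * L) ^ k + exp (-(4 / 3) * L) ^ j := by
  wlog hkj : k ≤ j generalizing k j
  · rw [add_comm, mul_comm (k : ℝ)]
    rw [add_comm (k : ℝ)] at hc
    exact this hc (le_of_not_ge hkj)
  have hmain : exp (-(c * (k * j)) / 3) ≤ exp (-(4 / 3) * L) ^ k := by
    rw [← exp_nat_mul]
    gcongr
    rcases Nat.eq_zero_or_pos k with rfl | hk
    · simp
    have hkj' : (k : ℝ) ≤ j := by exact_mod_cast hkj
    have hc0 : 0 ≤ c := (by positivity : 0 ≤ 8 * L / (k + j)).trans hc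
    rw [div_le_iff₀ (by positivity)] at hc
    nlinarith [mul_le_mul_of_nonneg_left hkj' (mul_nonneg hc0 (Nat.cast_nonneg k))]
  exact hmain.trans (le_add_of_nonneg_right (by positivity))

lemma measureReal_not_forall_cutConcentrated_le {n : ℕ} {p ε : ℝ} (hp0 : 0 ≤ p) (hp1 : p ≤ 1)
    (hε0 : 0 ≤ ε) (hε : ε ≤ 3 / 4) (hεp : 8 * log n / n ≤ ε ^ 2 * p) :
    (ERMeasure n p).real {ω | ¬ ∀ S, CutConcentrated n p ε ω S} ≤
      4 * ((1 + exp (-(4 / 3) * log n)) ^ n - 1) := by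
  set x := exp (-(4 / 3) * log n)
  set T := (univ : Finset (Finset (Fin n))).filter fun S => S ≠ ∅ ∧ S ≠ univ
  have hsub : {ω | ¬ ∀ S, CutConcentrated n p ε ω S} ⊆
      ⋃ S ∈ T, {ω | ¬ CutConcentrated n p ε ω S} := by
    intro ω hω
    obtain ⟨S, hS⟩ := not_forall.1 hω
    refine Set.mem_biUnion (x := S) ?_ hS
    by_contra hT
    refine hS (cutConcentrated_of_eq_empty_or_eq_univ p ε ω ?_)
    simpa [T, or_iff_not_imp_left] using hT
  have hterm (S : Finset (Fin n)) :
      (ERMeasure n p).real {ω | ¬ CutConcentrated n p ε ω S} ≤ 2 * (x ^ #S + x ^ #Sᶜ) := by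
    have hn : (#S : ℝ) + #Sᶜ = n := by
      rw [← Nat.cast_add, card_add_card_compl, Fintype.card_fin]
    have hexp := exp_neg_mul_le_pow_add_pow (c := ε ^ 2 * p) (log_natCast_nonneg n)
      (by rwa [hn])
    refine (measureReal_not_cutConcentrated_le hp0 hp1 hε0 hε S).trans ?_
    rw [show (n : ℝ) - #S = #Sᶜ by linarith]
    convert mul_le_mul_of_nonneg_left hexp two_pos.le using 4
    ring
  have hsymm : ∑ S ∈ T, x ^ #Sᶜ = ∑ S ∈ T, x ^ #S :=
    sum_nbij' compl compl (by simp [T, and_comm]) (by simp [T, and_comm])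
      (fun S _ => compl_compl S) (fun S _ => compl_compl S) (fun _ _ => rfl)
  have hT : ∑ S ∈ T, x ^ #S ≤ (1 + x) ^ n - 1 := by
    calc ∑ S ∈ T, x ^ #S ≤ ∑ S ∈ univ.erase ∅, x ^ #S :=
          sum_le_sum_of_subset_of_nonneg (fun S hS => by simp_all [T])
            fun _ _ _ => by positivity
      _ = (1 + x) ^ n - 1 := by
          rw [sum_erase_eq_sub (mem_univ _), card_empty, pow_zero, add_comm 1 x,
            ← Fin.sum_pow_mul_eq_add_pow]
          simp
  calc (ERMeasure n p).real {ω | ¬ ∀ S, CutConcentrated n p ε ω S}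
      ≤ (ERMeasure n p).real (⋃ S ∈ T, {ω | ¬ CutConcentrated n p ε ω S}) :=
        measureReal_mono hsub (measure_ne_top _ _)
    _ ≤ ∑ S ∈ T, (ERMeasure n p).real {ω | ¬ CutConcentrated n p ε ω S} :=
        measureReal_biUnion_finset_le _ _
    _ ≤ ∑ S ∈ T, 2 * (x ^ #S + x ^ #Sᶜ) := sum_le_sum fun S _ => hterm S
    _ = 4 * ∑ S ∈ T, x ^ #S := by rw [← mul_sum, sum_add_distrib, hsymm]; ring
    _ ≤ 4 * ((1 + x) ^ n - 1) := by gcongr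

lemma rpow_neg_half_sq {a : ℝ} (ha : 0 ≤ a) : (a ^ (-(1 / 2 : ℝ))) ^ 2 = a⁻¹ := by
  rw [← rpow_natCast, ← rpow_mul ha]
  norm_num [rpow_neg_one]

lemma nonneg_of_mul_log_div_le {n : ℕ} {a p : ℝ} (ha : 0 ≤ a) (hap : a * log n / n ≤ p) :
    0 ≤ p :=
  (by positivity : 0 ≤ a * log n / n).trans hap

lemma measureReal_not_forall_cutConcentrated_le_of_mul_log_div_le {n : ℕ} {p a : ℝ} (hp1 : p ≤ 1)
    (ha : 15 ≤ a) (hap : a * log n / n ≤ p) :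
    (ERMeasure n p).real {ω | ¬ ∀ S, CutConcentrated n p (√8 * a ^ (-(1 / 2 : ℝ))) ω S} ≤
      4 * ((1 + exp (-(4 / 3) * log n)) ^ n - 1) := by
  have hε : (√8 * a ^ (-(1 / 2 : ℝ))) ^ 2 = 8 / a := by
    rw [mul_pow, sq_sqrt (by norm_num), rpow_neg_half_sq (by linarith), div_eq_mul_inv]
  have hp0 : 0 ≤ p := nonneg_of_mul_log_div_le (by linarith) hap
  refine measureReal_not_forall_cutConcentrated_le hp0 hp1 (by positivity) ?_ ?_
  · refine le_of_sq_le_sq ?_ (by norm_num)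
    rw [hε, div_le_iff₀ (by linarith)]
    linarith
  · calc 8 * log n / n = 8 / a * (a * log n / n) := by field_simp
      _ ≤ _ := by rw [hε]; gcongr

lemma le_of_mul_log_div_le_one {n : ℕ} {a : ℝ} (ha : 0 ≤ a) (hn : 3 ≤ n)
    (han : a * log n / n ≤ 1) : a ≤ n := by
  have hlog : 1 ≤ log n := by
    rw [le_log_iff_exp_le (by positivity)]
    have : (3 : ℝ) ≤ n := by exact_mod_cast hn
    linarith [exp_one_lt_d9]
  rw [div_le_one (by positivity)] at han
  nlinarith

lemma abs_degree_sub_le_of_forall_cutConcentrated {n : ℕ} {p a : ℝ} {ω : Sym2 (Fin n) → Bool}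
    (hp1 : p ≤ 1) (ha : 15 ≤ a) (hap : a * log n / n ≤ p) (hn : 100 ≤ n)
    (h : ∀ S, CutConcentrated n p (√8 * a ^ (-(1 / 2 : ℝ))) ω S) (v : Fin n) :
    |((ERGraph n ω).degree v : ℝ) - p * n| ≤ 3 * a ^ (-(1 / 2 : ℝ)) * (p * n) := by
  set η := a ^ (-(1 / 2 : ℝ))
  have hp : 0 ≤ p := nonneg_of_mul_log_div_le (by linarith) hap
  have han : a ≤ n := le_of_mul_log_div_le_one (by linarith) (by omega) (hap.trans hp1)
  have hηn : 10 ≤ η * n := by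
    have hn' : (100 : ℝ) ≤ n := by exact_mod_cast hn
    refine le_of_sq_le_sq ?_ (by positivity)
    rw [mul_pow, rpow_neg_half_sq (by linarith), inv_mul_eq_div, le_div_iff₀ (by linarith)]
    nlinarith
  have hsqrt8 : √8 < 2.9 := by
    rw [sqrt_lt' (by norm_num)]; norm_num
  have hslack : p ≤ (3 - √8) * (η * n) * p :=
    le_mul_of_one_le_left hp (by nlinarith)
  calc |((ERGraph n ω).degree v : ℝ) - p * n| ≤ √8 * η * (p * n) + p :=
        abs_degree_sub_le_of_cutConcentrated hp (by positivity) (h {v})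
    _ ≤ 3 * η * (p * n) := by nlinarith

lemma tendsto_one_add_exp_neg_log_pow :
    Tendsto (fun n : ℕ => (1 + exp (-(4 / 3) * log n)) ^ n) atTop (𝓝 1) := by
  have hlog : Tendsto (fun n : ℕ => log n) atTop atTop :=
    tendsto_log_atTop.comp tendsto_natCast_atTop_atTop
  have hmul : Tendsto (fun n : ℕ => n * exp (-(4 / 3) * log n)) atTop (𝓝 0) := by
    refine (tendsto_exp_atBot.comp (hlog.const_mul_atTop_of_neg (by norm_num : -(1 / 3 : ℝ) < 0))
      ).congr' ?_
    filter_upwards [eventually_gt_atTop 0] with n hn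
    rw [Function.comp_apply, ← exp_log (Nat.cast_pos.2 hn : (0 : ℝ) < n), ← exp_add, log_exp]
    ring_nf
  have hexp := (continuous_exp.tendsto 0).comp hmul
  rw [exp_zero] at hexp
  refine tendsto_of_tendsto_of_tendsto_of_le_of_le tendsto_const_nhds hexp
    (fun n => one_le_pow₀ (by simp [(exp_pos _).le])) fun n => ?_
  calc (1 + exp (-(4 / 3) * log n)) ^ n ≤ exp (exp (-(4 / 3) * log n)) ^ n := by
        gcongr; linarith [add_one_le_exp (exp (-(4 / 3) * log n))]
    _ = _ := (exp_nat_mul _ n).symm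

lemma isProbabilityMeasure_ERMeasure (n : ℕ) {p : ℝ} (hp0 : 0 ≤ p) (hp1 : p ≤ 1) :
    IsProbabilityMeasure (ERMeasure n p) := by
  have := isProbabilityMeasure_bernoulliMeasure hp0 hp1
  unfold ERMeasure; infer_instance

lemma tendsto_measure_of_tendsto_measureReal_compl {Ω : ℕ → Type*} [∀ n, MeasurableSpace (Ω n)]
    {μ : ∀ n, Measure (Ω n)} {A B : ∀ n, Set (Ω n)}
    (hμ : ∀ᶠ n in atTop, IsProbabilityMeasure (μ n)) (hAB : ∀ᶠ n in atTop, A n ⊆ B n)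
    (hA : Tendsto (fun n => (μ n).real (A n)ᶜ) atTop (𝓝 0)) :
    Tendsto (fun n => μ n (B n)) atTop (𝓝 1) := by
  have hA' : Tendsto (fun n => 1 - ENNReal.ofReal ((μ n).real (A n)ᶜ)) atTop (𝓝 1) := by
    simpa using ENNReal.Tendsto.sub tendsto_const_nhds (ENNReal.tendsto_ofReal hA)
      (Or.inl ENNReal.one_ne_top)
  refine tendsto_of_tendsto_of_tendsto_of_le_of_le' hA' tendsto_const_nhds ?_ ?_
  · filter_upwards [hμ, hAB] with n _ hn
    rw [ofReal_measureReal]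
    calc 1 - μ n (A n)ᶜ ≤ μ n (A n) :=
          tsub_le_iff_right.2 (by simpa using measure_univ_le_add_compl (μ := μ n) (A n))
      _ ≤ μ n (B n) := measure_mono hn
  · filter_upwards [hμ] with n _
    exact prob_le_one

theorem edges_between_all_sets_general (α p : ℕ → ℝ)
    (hαtop : Tendsto α atTop atTop)
    (hp : ∀ n, α n * Real.log n / n ≤ p n) (hp1 : ∀ n, p n ≤ 1) :
    Tendsto (fun n =>
      ERMeasure n (p n) {ω | (∀ S : Finset (Fin n),
          |(∑ v ∈ Sᶜ, (((ERGraph n ω).neighborFinset v ∩ S).card : ℝ)) -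
              (S.card : ℝ) * ((n : ℝ) - S.card) * p n| ≤
            Real.sqrt 8 * (α n) ^ (-(1 / 2 : ℝ)) *
              ((S.card : ℝ) * ((n : ℝ) - S.card) * p n)) ∧
        (∀ v : Fin n,
          |((ERGraph n ω).degree v : ℝ) - p n * n| ≤
            3 * (α n) ^ (-(1 / 2 : ℝ)) * (p n * n))})
      atTop (nhds 1) := by
  have hα : ∀ᶠ n in atTop, 15 ≤ α n := hαtop.eventually_ge_atTop 15
  have hp0 : ∀ᶠ n in atTop, 0 ≤ p n := by
    filter_upwards [hα] with n hn
    exact nonneg_of_mul_log_div_le (by linarith) (hp n)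
  refine tendsto_measure_of_tendsto_measureReal_compl
    (A := fun n => {ω | ∀ S, CutConcentrated n (p n) (√8 * α n ^ (-(1 / 2 : ℝ))) ω S}) ?_ ?_ ?_
  · filter_upwards [hp0] with n hn
    exact isProbabilityMeasure_ERMeasure n hn (hp1 n)
  · filter_upwards [hα, eventually_ge_atTop 100] with n hαn hn ω hω
    exact ⟨hω, abs_degree_sub_le_of_forall_cutConcentrated (hp1 n) hαn (hp n) hn hω⟩
  · refine squeeze_zero' (.of_forall fun n => measureReal_nonneg)
      (by filter_upwards [hα] with n hn
          exact measureReal_not_forall_cutConcentrated_le_of_mul_log_div_le (hp1 n) hn (hp n)) ?_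
    simpa using (tendsto_one_add_exp_neg_log_pow.sub_const 1).const_mul 4

/-- Lemma 3 of the paper: w.h.p. `G(n,p)` with `p ≥ α(n)·ln n/n`, `α(n) → ∞`,
satisfies `e(S, V∖S) = |S|(n-|S|)p(1 ± √8·α(n)^{-1/2})` for every vertex subset `S`;
in particular every vertex has degree `(1 ± 3α(n)^{-1/2})pn`. -/
theorem edges_between_all_sets (α p : ℕ → ℝ)
    (hα0 : ∀ n, 0 < α n) (hαtop : Tendsto α atTop atTop)
    (hp : ∀ n, α n * Real.log n / n ≤ p n) (hp1 : ∀ n, p n ≤ 1) :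
    Tendsto (fun n =>
      ERMeasure n (p n) {ω | (∀ S : Finset (Fin n),
          |(∑ v ∈ Sᶜ, (((ERGraph n ω).neighborFinset v ∩ S).card : ℝ)) -
              (S.card : ℝ) * ((n : ℝ) - S.card) * p n| ≤
            Real.sqrt 8 * (α n) ^ (-(1 / 2 : ℝ)) *
              ((S.card : ℝ) * ((n : ℝ) - S.card) * p n)) ∧
        (∀ v : Fin n,
          |((ERGraph n ω).degree v : ℝ) - p n * n| ≤
            3 * (α n) ^ (-(1 / 2 : ℝ)) * (p n * n))})
      atTop (nhds 1) :=
  edges_between_all_sets_general α p hαtop hp hp1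
end
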